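/- (Uniform winner, incongruent loser.) Let v1 = v2 = 1 and let g be supported on two CTR pairs, g((r1,r2)) = p and g((r'1,r'2)) = 1−p, with p ∈ (0,1) and 0 ≤ r2 < r'2 ≤ r'1 < r1 ≤ 1. Then the no-disclosure revenue and the full-disclosure revenue of g are both equal to μ2 = p·r2 + (1−p)·r'2, and there exists a calibrated information structure x for g with Rev(x) > μ2. -/

import Mathlib

open scoped Classical

noncomputable section

/-- A CTR pair lies in the unit square. -/
def InUnitSq (r : ℝ × ℝ) : Prop := 0 ≤ r.1 ∧ r.1 ≤ 1 ∧ 0 ≤ r.2 ∧ r.2 ≤ 1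

/-- A finitely supported probability mass function on CTR pairs in [0,1]². -/
def IsPrior (g : ℝ × ℝ → ℝ) : Prop :=
  (Function.support g).Finite ∧ (∀ r, 0 ≤ g r) ∧
  (∀ r, g r ≠ 0 → InUnitSq r) ∧ (∑ᶠ r, g r) = 1

/-- An information structure for the prior `g`: finitely supported, nonnegative,
signals in [0,1]², with `r`-marginal equal to `g`. -/
def IsInfoStructure (g : ℝ × ℝ → ℝ) (x : (ℝ × ℝ) × (ℝ × ℝ) → ℝ) : Prop :=
  (Function.support x).Finite ∧ (∀ p, 0 ≤ x p) ∧
  (∀ p, x p ≠ 0 → InUnitSq p.2) ∧ (∀ r, (∑ᶠ s, x (r, s)) = g r)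

/-- Calibration: the posterior mean of `rᵢ` given any signal value `c` of bidder `i`
equals `c`. -/
def Calibrated (x : (ℝ × ℝ) × (ℝ × ℝ) → ℝ) : Prop :=
  ∀ c : ℝ, 0 ≤ c → c ≤ 1 →
    (∑ᶠ p : (ℝ × ℝ) × (ℝ × ℝ), if p.2.1 = c then x p * (p.1.1 - c) else 0) = 0 ∧
    (∑ᶠ p : (ℝ × ℝ) × (ℝ × ℝ), if p.2.2 = c then x p * (p.1.2 - c) else 0) = 0

/-- Independence: for each bidder `i` and each signal pair `s0` with positive
probability, the conditional mean of `rᵢ` given the full signal pair equals the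
conditional mean of `rᵢ` given `sᵢ` alone (stated in cross-multiplied form). -/
def Independent (x : (ℝ × ℝ) × (ℝ × ℝ) → ℝ) : Prop :=
  ∀ s0 : ℝ × ℝ, 0 < (∑ᶠ r, x (r, s0)) →
    ((∑ᶠ r, x (r, s0) * r.1) *
        (∑ᶠ p : (ℝ × ℝ) × (ℝ × ℝ), if p.2.1 = s0.1 then x p else 0)
      = (∑ᶠ p : (ℝ × ℝ) × (ℝ × ℝ), if p.2.1 = s0.1 then x p * p.1.1 else 0) *
        (∑ᶠ r, x (r, s0))) ∧
    ((∑ᶠ r, x (r, s0) * r.2) *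
        (∑ᶠ p : (ℝ × ℝ) × (ℝ × ℝ), if p.2.2 = s0.2 then x p else 0)
      = (∑ᶠ p : (ℝ × ℝ) × (ℝ × ℝ), if p.2.2 = s0.2 then x p * p.1.2 else 0) *
        (∑ᶠ r, x (r, s0)))

/-- Expected payment of the click-through auction given CTRs `r` and signals `s`,
with uniform tie-breaking (division by zero is zero in Lean, matching t/0 = 0). -/
def pay (v1 v2 : ℝ) (r s : ℝ × ℝ) : ℝ :=
  if v2 * s.2 < v1 * s.1 then r.1 * (v2 * s.2 / s.1)
  else if v1 * s.1 < v2 * s.2 then r.2 * (v1 * s.1 / s.2)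
  else (r.1 * (v2 * s.2 / s.1) + r.2 * (v1 * s.1 / s.2)) / 2

/-- Expected revenue of an information structure. -/
def Rev (v1 v2 : ℝ) (x : (ℝ × ℝ) × (ℝ × ℝ) → ℝ) : ℝ :=
  ∑ᶠ p : (ℝ × ℝ) × (ℝ × ℝ), x p * pay v1 v2 p.1 p.2

/-- Revenue of the no-disclosure information structure. -/
def noDisclosureRev (v1 v2 : ℝ) (g : ℝ × ℝ → ℝ) : ℝ :=
  min (v1 * ∑ᶠ r : ℝ × ℝ, g r * r.1) (v2 * ∑ᶠ r : ℝ × ℝ, g r * r.2)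

/-- Revenue of the full-disclosure information structure. -/
def fullDisclosureRev (v1 v2 : ℝ) (g : ℝ × ℝ → ℝ) : ℝ :=
  ∑ᶠ r : ℝ × ℝ, g r * min (v1 * r.1) (v2 * r.2)

/-! In both states bidder 2's CTR is below bidder 1's, so under full and under no disclosure
bidder 1 always wins and the revenue is bidder 2's expected CTR `μ₂`. To beat it, bidder 1's
signal pools the two states with probability 1/4 and reveals the state otherwise, and bidder 2's
signal is high on (first state, pooled) and (second state, revealed) and low on the other two
atoms. Bidder 1 still always wins and pays `r₁ s₂ / s₁` per auction. On a pooled signal `m` the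
price `s₂ / m` is charged per click of `r₁`, and bidder 2's signal is high exactly when `r₁` is
high; this correlation lifts the revenue above `μ₂` by
`p (1 - p) (r₁ - r₁') (s_high - s_low) / (4 m)`. -/

def pointMasses {ι α : Type*} [Fintype ι] (a : ι → α) (w : ι → ℝ) (q : α) : ℝ :=
  ∑ i, if a i = q then w i else 0

section pointMasses

variable {ι α : Type*} [Fintype ι]

lemma support_pointMasses_subset (a : ι → α) (w : ι → ℝ) :
    Function.support (pointMasses a w) ⊆ Set.range a := by
  intro q hq
  obtain ⟨i, -, hi⟩ := Finset.exists_ne_zero_of_sum_ne_zero hq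
  exact ⟨i, of_not_not fun h => hi (if_neg h)⟩

lemma pointMasses_nonneg {a : ι → α} {w : ι → ℝ} (hw : ∀ i, 0 ≤ w i) (q : α) :
    0 ≤ pointMasses a w q :=
  Finset.sum_nonneg fun i _ => by split_ifs <;> simp [hw i]

lemma finsum_pointMasses_mul (a : ι → α) (w : ι → ℝ) (F : α → ℝ) :
    ∑ᶠ q, pointMasses a w q * F q = ∑ i, w i * F (a i) := by
  rw [finsum_eq_sum_of_support_subset _ (s := Finset.univ.image a)
    ((Function.support_mul_subset_left _ _).trans (by simpa using support_pointMasses_subset a w))]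
  simp only [pointMasses, Finset.sum_mul, ite_mul, zero_mul]
  rw [Finset.sum_comm]
  simp

lemma finsum_ite_pointMasses_mul (a : ι → α) (w : ι → ℝ) (P : α → Prop) [DecidablePred P]
    (F : α → ℝ) :
    ∑ᶠ q, (if P q then pointMasses a w q * F q else 0) =
      ∑ i, if P (a i) then w i * F (a i) else 0 := by
  have h := finsum_pointMasses_mul a w (fun q => if P q then F q else 0)
  simpa only [mul_ite, mul_zero] using h

lemma finsum_pointMasses_mk {β : Type*} (a : ι → α × β) (w : ι → ℝ) (r : α) :
    ∑ᶠ s, pointMasses a w (r, s) = pointMasses (fun i => (a i).1) w r := by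
  rw [finsum_eq_sum_of_support_subset _ (s := Finset.univ.image fun i => (a i).2)]
  · simp only [pointMasses, Prod.ext_iff]
    rw [Finset.sum_comm]
    simp [ite_and]
  · intro s hs
    obtain ⟨i, hi⟩ := support_pointMasses_subset a w hs
    simpa using ⟨i, by rw [hi]⟩

lemma pointMasses_pair [DecidableEq α] {A B : α} (hAB : A ≠ B) (p q : ℝ) (r : α) :
    pointMasses ![A, B] ![p, q] r = if r = A then p else if r = B then q else 0 := by
  by_cases hA : r = A <;> by_cases hB : r = B <;> simp_all [pointMasses, eq_comm]

end pointMasses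

lemma inUnitSq_iff {r : ℝ × ℝ} : InUnitSq r ↔ r.1 ∈ Set.Icc 0 1 ∧ r.2 ∈ Set.Icc 0 1 := by
  simp only [InUnitSq, Set.mem_Icc, and_assoc]

lemma isInfoStructure_pointMasses {ι κ : Type*} [Fintype ι] [Fintype κ] {a : ι → ℝ × ℝ}
    {w : ι → ℝ} {μ : ι → κ → ℝ} {σ : ι → κ → ℝ × ℝ} (hμ : ∀ i j, 0 ≤ μ i j)
    (hμw : ∀ i, ∑ j, μ i j = w i) (hσ : ∀ i j, InUnitSq (σ i j)) :
    IsInfoStructure (pointMasses a w)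
      (pointMasses (fun ij : ι × κ => (a ij.1, σ ij.1 ij.2)) fun ij => μ ij.1 ij.2) := by
  refine ⟨(Set.finite_range _).subset (support_pointMasses_subset _ _),
    pointMasses_nonneg fun ij => hμ ij.1 ij.2, fun q hq => ?_, fun r => ?_⟩
  · obtain ⟨ij, rfl⟩ := support_pointMasses_subset _ _ hq
    exact hσ ij.1 ij.2
  · rw [finsum_pointMasses_mk, pointMasses, pointMasses, Fintype.sum_prod_type]
    refine Finset.sum_congr rfl fun i _ => ?_
    split_ifs
    · exact hμw i
    · simp

lemma fullDisclosureRev_eq_of_le {v1 v2 : ℝ} {g : ℝ × ℝ → ℝ}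
    (hwin : ∀ r, g r ≠ 0 → v2 * r.2 ≤ v1 * r.1) :
    fullDisclosureRev v1 v2 g = v2 * ∑ᶠ r, g r * r.2 := by
  rw [fullDisclosureRev, mul_finsum]
  refine finsum_congr fun r => ?_
  by_cases hr : g r = 0
  · simp [hr]
  · rw [min_eq_right (hwin r hr)]
    ring

lemma noDisclosureRev_eq_of_le {v1 v2 : ℝ} {g : ℝ × ℝ → ℝ} (hfin : (Function.support g).Finite)
    (hg : ∀ r, 0 ≤ g r) (hwin : ∀ r, g r ≠ 0 → v2 * r.2 ≤ v1 * r.1) :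
    noDisclosureRev v1 v2 g = v2 * ∑ᶠ r, g r * r.2 := by
  refine min_eq_right ?_
  rw [mul_finsum, mul_finsum]
  have hsupp (c : ℝ) (F : ℝ × ℝ → ℝ) :
      Function.support (fun r => c * (g r * F r)) ⊆ Function.support g :=
    (Function.support_mul_subset_right _ _).trans (Function.support_mul_subset_left _ _)
  refine finsum_le_finsum' (hfin.subset (hsupp _ _)) (hfin.subset (hsupp _ _)) fun r => ?_
  by_cases hr : g r = 0
  · simp [hr]
  · nlinarith [hg r, hwin r hr]

lemma pay_of_lt {v1 v2 s1 s2 : ℝ} (r : ℝ × ℝ) (h : v2 * s2 < v1 * s1) :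
    pay v1 v2 r (s1, s2) = r.1 * (v2 * s2 / s1) :=
  if_pos h

def wmean (u v a b : ℝ) : ℝ := (u * a + v * b) / (u + v)

section wmean

variable {u v a b : ℝ}

lemma mul_sub_wmean_add_mul_sub_wmean (huv : u + v ≠ 0) :
    u * (a - wmean u v a b) + v * (b - wmean u v a b) = 0 := by
  rw [wmean]
  field_simp
  ring

lemma wmean_mem_Icc {l h : ℝ} (hu : 0 ≤ u) (hv : 0 ≤ v) (huv : 0 < u + v)
    (ha : a ∈ Set.Icc l h) (hb : b ∈ Set.Icc l h) : wmean u v a b ∈ Set.Icc l h := by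
  rw [wmean, Set.mem_Icc, le_div_iff₀ huv, div_le_iff₀ huv]
  constructor <;> nlinarith [ha.1, ha.2, hb.1, hb.2]

lemma left_lt_wmean (hv : 0 < v) (huv : 0 < u + v) (hab : a < b) : a < wmean u v a b := by
  rw [wmean, lt_div_iff₀ huv]
  nlinarith

lemma wmean_lt_right (hu : 0 < u) (huv : 0 < u + v) (hab : a < b) : wmean u v a b < b := by
  rw [wmean, div_lt_iff₀ huv]
  nlinarith

lemma wmean_lt_wmean {u' v' : ℝ} (huv : 0 < u + v) (huv' : 0 < u' + v') (hab : a < b)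
    (hw : u' * v < u * v') : wmean u v a b < wmean u' v' a b := by
  rw [wmean, wmean, div_lt_div_iff₀ huv huv']
  nlinarith [mul_pos (sub_pos.2 hw) (sub_pos.2 hab)]

end wmean

lemma ite_add_ite_eq_zero {u v a b s c : ℝ} (hs : u * (a - s) + v * (b - s) = 0) :
    (if s = c then u * (a - c) else 0) + (if s = c then v * (b - c) else 0) = 0 := by
  split_ifs with h
  · rwa [← h]
  · simp

lemma ite_mul_sub_self_eq_zero (u a c : ℝ) : (if a = c then u * (a - c) else 0) = 0 := by
  split_ifs with h <;> simp [h]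

/-- The atom `(i, j)` carries state `i` (`0 ↦ (r1, r2)`, `1 ↦ (r1', r2')`) and either pools
(`j = 0`, weight 1/4) or reveals (`j = 1`, weight 3/4) the state to bidder 1. Every signal value
is the `wmean` of the CTRs of the atoms sending it, weighted by their masses. -/
def incongruentStructure (p r1 r2 r1' r2' : ℝ) : (ℝ × ℝ) × (ℝ × ℝ) → ℝ :=
  pointMasses
    (fun ij : Fin 2 × Fin 2 => (![(r1, r2), (r1', r2')] ij.1,
      ![![(wmean ((1 - p) / 4) (p / 4) r1' r1, wmean (p / 4) (3 * (1 - p) / 4) r2 r2'),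
          (r1, wmean (3 * p / 4) ((1 - p) / 4) r2 r2')],
        ![(wmean ((1 - p) / 4) (p / 4) r1' r1, wmean (3 * p / 4) ((1 - p) / 4) r2 r2'),
          (r1', wmean (p / 4) (3 * (1 - p) / 4) r2 r2')]] ij.1 ij.2))
    fun ij => ![![p / 4, 3 * p / 4], ![(1 - p) / 4, 3 * (1 - p) / 4]] ij.1 ij.2

lemma isInfoStructure_incongruentStructure {p r1 r2 r1' r2' : ℝ} (hp0 : 0 ≤ p) (hp1 : p ≤ 1)
    (hA : InUnitSq (r1, r2)) (hB : InUnitSq (r1', r2')) :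
    IsInfoStructure (pointMasses ![(r1, r2), (r1', r2')] ![p, 1 - p])
      (incongruentStructure p r1 r2 r1' r2') := by
  obtain ⟨hr1, hr2⟩ := inUnitSq_iff.1 hA
  obtain ⟨hr1', hr2'⟩ := inUnitSq_iff.1 hB
  have hm : wmean ((1 - p) / 4) (p / 4) r1' r1 ∈ Set.Icc 0 1 :=
    wmean_mem_Icc (by linarith) (by linarith) (by linarith) hr1' hr1
  have hsh : wmean (p / 4) (3 * (1 - p) / 4) r2 r2' ∈ Set.Icc 0 1 :=
    wmean_mem_Icc (by linarith) (by linarith) (by linarith) hr2 hr2'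
  have hsl : wmean (3 * p / 4) ((1 - p) / 4) r2 r2' ∈ Set.Icc 0 1 :=
    wmean_mem_Icc (by linarith) (by linarith) (by linarith) hr2 hr2'
  refine isInfoStructure_pointMasses ?_ ?_ ?_ <;>
    simp only [Fin.forall_fin_two, Fin.sum_univ_two, Matrix.cons_val_zero, Matrix.cons_val_one,
      inUnitSq_iff]
  · refine ⟨⟨?_, ?_⟩, ?_, ?_⟩ <;> linarith
  · constructor <;> ring
  · exact ⟨⟨⟨hm, hsh⟩, hr1, hsl⟩, ⟨hm, hsl⟩, hr1', hsh⟩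

lemma calibrated_incongruentStructure {p : ℝ} (hp0 : 0 ≤ p) (hp1 : p ≤ 1) (r1 r2 r1' r2' : ℝ) :
    Calibrated (incongruentStructure p r1 r2 r1' r2') := by
  intro c _ _
  simp only [incongruentStructure, finsum_ite_pointMasses_mul, Fintype.sum_prod_type,
    Fin.sum_univ_two, Matrix.cons_val_zero, Matrix.cons_val_one]
  set m := wmean ((1 - p) / 4) (p / 4) r1' r1
  set sh := wmean (p / 4) (3 * (1 - p) / 4) r2 r2'
  set sl := wmean (3 * p / 4) ((1 - p) / 4) r2 r2'
  -- `simp` leaves the `Decidable` instances of the `if`s stated on unreduced vector entries;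
  -- `show` restates them so that `linear_combination` recognises the `if`s below.
  constructor
  · show (if m = c then p / 4 * (r1 - c) else 0) + (if r1 = c then 3 * p / 4 * (r1 - c) else 0) +
      ((if m = c then (1 - p) / 4 * (r1' - c) else 0) +
        (if r1' = c then 3 * (1 - p) / 4 * (r1' - c) else 0)) = 0
    linear_combination
      ite_add_ite_eq_zero (c := c) (mul_sub_wmean_add_mul_sub_wmean (u := (1 - p) / 4)
        (v := p / 4) (a := r1') (b := r1) (by linarith)) +
      ite_mul_sub_self_eq_zero (3 * p / 4) r1 c + ite_mul_sub_self_eq_zero (3 * (1 - p) / 4) r1' c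
  · show (if sh = c then p / 4 * (r2 - c) else 0) + (if sl = c then 3 * p / 4 * (r2 - c) else 0) +
      ((if sl = c then (1 - p) / 4 * (r2' - c) else 0) +
        (if sh = c then 3 * (1 - p) / 4 * (r2' - c) else 0)) = 0
    linear_combination
      ite_add_ite_eq_zero (c := c) (mul_sub_wmean_add_mul_sub_wmean (u := p / 4)
        (v := 3 * (1 - p) / 4) (a := r2) (b := r2') (by linarith)) +
      ite_add_ite_eq_zero (c := c) (mul_sub_wmean_add_mul_sub_wmean (u := 3 * p / 4)
        (v := (1 - p) / 4) (a := r2) (b := r2') (by linarith))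

lemma lt_rev_incongruentStructure {p r1 r2 r1' r2' : ℝ} (hp0 : 0 < p) (hp1 : p < 1)
    (hr1' : 0 < r1') (h1 : r2 < r2') (h2 : r2' ≤ r1') (h3 : r1' < r1) :
    p * r2 + (1 - p) * r2' < Rev 1 1 (incongruentStructure p r1 r2 r1' r2') := by
  rw [Rev, incongruentStructure, finsum_pointMasses_mul]
  simp only [Fintype.sum_prod_type, Fin.sum_univ_two, Matrix.cons_val_zero, Matrix.cons_val_one]
  set m := wmean ((1 - p) / 4) (p / 4) r1' r1 with hm
  set sh := wmean (p / 4) (3 * (1 - p) / 4) r2 r2'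
  set sl := wmean (3 * p / 4) ((1 - p) / 4) r2 r2'
  have hm_gt : r1' < m := left_lt_wmean (by linarith) (by linarith) h3
  have hsh_lt : sh < r2' := wmean_lt_right (by linarith) (by linarith) h1
  have hsl_lt_sh : sl < sh := wmean_lt_wmean (by linarith) (by linarith) h1 (by nlinarith)
  have hm_eq : m = p * r1 + (1 - p) * r1' := by
    rw [hm, wmean]
    field_simp
    ring
  have hsh_bal : p / 4 * (r2 - sh) + 3 * (1 - p) / 4 * (r2' - sh) = 0 :=
    mul_sub_wmean_add_mul_sub_wmean (by linarith)
  have hsl_bal : 3 * p / 4 * (r2 - sl) + (1 - p) / 4 * (r2' - sl) = 0 :=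
    mul_sub_wmean_add_mul_sub_wmean (by linarith)
  rw [pay_of_lt _ (by linarith), pay_of_lt _ (by linarith), pay_of_lt _ (by linarith),
    pay_of_lt _ (by linarith)]
  simp only [one_mul]
  have hm0 : m ≠ 0 := by linarith
  have hr10 : r1 ≠ 0 := by linarith
  have hr1'0 : r1' ≠ 0 := hr1'.ne'
  have key : p / 4 * (r1 * (sh / m)) + 3 * p / 4 * (r1 * (sl / r1)) +
      ((1 - p) / 4 * (r1' * (sl / m)) + 3 * (1 - p) / 4 * (r1' * (sh / r1'))) =
      p * r2 + (1 - p) * r2' + p * (1 - p) * (r1 - r1') * (sh - sl) / (4 * m) := by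
    field_simp
    linear_combination -(p * sh + (1 - p) * sl) * hm_eq - 4 * m * (hsh_bal + hsl_bal)
  have hsurplus : 0 < p * (1 - p) * (r1 - r1') * (sh - sl) / (4 * m) :=
    div_pos (mul_pos (mul_pos (mul_pos hp0 (sub_pos.2 hp1)) (sub_pos.2 h3)) (sub_pos.2 hsl_lt_sh))
      (by linarith)
  linarith

/-- uniform winner, incongruent loser: no-disclosure and
full-disclosure both yield μ2, and some calibrated information structure yields
strictly more. -/
theorem uniform_winner_incongruent_loser
    (p r1 r2 r1' r2' : ℝ) (hp0 : 0 < p) (hp1 : p < 1)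
    (h0 : 0 ≤ r2) (h1 : r2 < r2') (h2 : r2' ≤ r1') (h3 : r1' < r1) (h4 : r1 ≤ 1)
    (g : ℝ × ℝ → ℝ)
    (hgdef : ∀ r, g r = if r = (r1, r2) then p else if r = (r1', r2') then 1 - p else 0) :
    noDisclosureRev 1 1 g = p * r2 + (1 - p) * r2' ∧
    fullDisclosureRev 1 1 g = p * r2 + (1 - p) * r2' ∧
    ∃ x : (ℝ × ℝ) × (ℝ × ℝ) → ℝ,
      IsInfoStructure g x ∧ Calibrated x ∧ p * r2 + (1 - p) * r2' < Rev 1 1 x := by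
  have hAB : ((r1, r2) : ℝ × ℝ) ≠ (r1', r2') := fun h => h3.ne' (Prod.mk.inj h).1
  obtain rfl : g = pointMasses ![(r1, r2), (r1', r2')] ![p, 1 - p] :=
    funext fun r => (hgdef r).trans (pointMasses_pair hAB p (1 - p) r).symm
  have hg : ∀ r, 0 ≤ pointMasses ![(r1, r2), (r1', r2')] ![p, 1 - p] r :=
    pointMasses_nonneg (Fin.forall_fin_two.2 ⟨hp0.le, sub_nonneg.2 hp1.le⟩)
  have hwin : ∀ r, pointMasses ![(r1, r2), (r1', r2')] ![p, 1 - p] r ≠ 0 → 1 * r.2 ≤ 1 * r.1 := by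
    intro r hr
    obtain ⟨i, rfl⟩ := support_pointMasses_subset _ _ hr
    revert i
    simp only [Fin.forall_fin_two, Matrix.cons_val_zero, Matrix.cons_val_one, one_mul]
    exact ⟨fun _ => by linarith, fun _ => by linarith⟩
  have hmean : ∑ᶠ r, pointMasses ![(r1, r2), (r1', r2')] ![p, 1 - p] r * r.2 =
      p * r2 + (1 - p) * r2' := by
    simp [finsum_pointMasses_mul]
  refine ⟨?_, ?_, incongruentStructure p r1 r2 r1' r2',
    isInfoStructure_incongruentStructure hp0.le hp1.le ⟨by linarith, h4, h0, by linarith⟩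
      ⟨by linarith, by linarith, by linarith, by linarith⟩,
    calibrated_incongruentStructure hp0.le hp1.le r1 r2 r1' r2',
    lt_rev_incongruentStructure hp0 hp1 (by linarith) h1 h2 h3⟩
  · rw [noDisclosureRev_eq_of_le ((Set.finite_range _).subset (support_pointMasses_subset _ _)) hg
      hwin, hmean, one_mul]
  · rw [fullDisclosureRev_eq_of_le hwin, hmean, one_mul]
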